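/- Let (W,S) be a Coxeter system. Call w ∈ W separated if no simple reflection appearing in some (equivalently any) reduced expression of P_↓(w) belongs to D_L(w) or D_R(w), where P_↓(w) is the minimal double coset representative of W_{D_L(w)} w W_{D_R(w)}. If w is separated, then B_↓(w) = [e, P_↓(w)]; i.e. the set of minimal double coset representatives in [e,w] equals the lower interval below P_↓(w). -/

import Mathlib

/-!
Strong exchange comes from Tits' sign action of `W` on `W × ℤˣ`: `s i` conjugates the first
entry by `s i` and flips the sign exactly when that entry is `s i`. The sign picked up by `(t, 1)`
under `w` is `-1` iff `t` is a right inversion of `w`, and along a word `ω` it is the parity of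
the occurrences of `t` in the right inversion sequence of `ω`; hence every inversion of `π ω`
occurs in that sequence. Strong exchange yields Deodhar's lifting property: if `s` is a left
descent of `w` but not of `v ≤ w`, then `v ≤ s w`.

By lifting, an element without left descents in `I` and right descents in `J` lies below every
element of `W_I u W_J`; and if such an element `v` lies below some `z` of the double coset, then
`z` can be shortened along its descents in `I` and `J` while staying above `v`, until `z` itself is
descent-free and hence below every element of the coset. For `I = D_L(w)`, `J = D_R(w)` the minimal element `P_↓(w)` is
descent-free, which gives `B_↓(w) ⊆ [e, P_↓(w)]`. Conversely, `P_↓(w) ≤ w`, and a descent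
`s ∈ D_L(w)` of some `v ≤ P_↓(w)` would give `s ≤ P_↓(w)`, which separation excludes.
-/

open CoxeterSystem List

variable {B W : Type*} [Group W] {M : CoxeterMatrix B}

namespace CoxeterBruhat

/-- One edge in the Bruhat graph: `v = t * u` for a reflection `t`, with `ℓ(u) < ℓ(v)`. -/
def Step (cs : CoxeterSystem M W) (u v : W) : Prop :=
  ∃ t : W, cs.IsReflection t ∧ v = t * u ∧ cs.length u < cs.length v

/-- The Bruhat order, as the reflexive-transitive closure of `Step`. -/
def BruhatLE (cs : CoxeterSystem M W) : W → W → Prop :=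
  Relation.ReflTransGen (Step cs)

/-- The standard parabolic subgroup generated by the simple reflections indexed by `I`. -/
def parabolic (cs : CoxeterSystem M W) (I : Set B) : Subgroup W :=
  Subgroup.closure (cs.simple '' I)

/-- The left descent set `D_L(w)`. -/
def leftDescents (cs : CoxeterSystem M W) (w : W) : Set B :=
  {i | cs.IsLeftDescent w i}

/-- The right descent set `D_R(w)`. -/
def rightDescents (cs : CoxeterSystem M W) (w : W) : Set B :=
  {i | cs.IsRightDescent w i}

/-- The double coset `W_I u W_J` as a set. -/
def doubleCoset (cs : CoxeterSystem M W) (I J : Set B) (u : W) : Set W :=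
  {v | ∃ x ∈ parabolic cs I, ∃ y ∈ parabolic cs J, v = x * u * y}

/-- The Bruhat coset `C_w(u) = W_{D_L(w)} u W_{D_R(w)}`. -/
def bCoset (cs : CoxeterSystem M W) (w u : W) : Set W :=
  doubleCoset cs (leftDescents cs w) (rightDescents cs w) u

/-- The lower Bruhat interval `B(w) = [e, w]`. -/
def lowerInterval (cs : CoxeterSystem M W) (w : W) : Set W :=
  {v | BruhatLE cs v w}

/-- The support `S(v)` of `v`: simple reflections below `v` in Bruhat order. -/
def support (cs : CoxeterSystem M W) (v : W) : Set B :=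
  {i | BruhatLE cs (cs.simple i) v}

section SignAction

open scoped Classical

variable (cs : CoxeterSystem M W)

noncomputable def signFlip (i : B) (p : W × ℤˣ) : W × ℤˣ :=
  (cs.simple i * p.1 * cs.simple i, (if p.1 = cs.simple i then -1 else 1) * p.2)

private lemma conj_eq_iff {g x y : W} : g * x * g⁻¹ = y ↔ x = g⁻¹ * y * g := by
  constructor <;> rintro rfl <;> group

lemma signFlip_involutive (i : B) : Function.Involutive (signFlip cs i) := by
  rintro ⟨t, ε⟩
  have hconj : cs.simple i * t * cs.simple i = cs.simple i ↔ t = cs.simple i := by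
    simpa using conj_eq_iff (g := cs.simple i) (x := t) (y := cs.simple i)
  simp only [signFlip, hconj]
  by_cases h : t = cs.simple i <;> simp [h, mul_assoc]

noncomputable def signFlipPerm (i : B) : Equiv.Perm (W × ℤˣ) :=
  (signFlip_involutive cs i).toPerm

private lemma conj_pow_eq_dihedral_iff (i i' : B) (j k : ℕ) (t : W) :
    (cs.simple i * cs.simple i') ^ k * t * ((cs.simple i * cs.simple i') ^ k)⁻¹ =
        (cs.simple i' * cs.simple i) ^ j * cs.simple i' ↔
      t = (cs.simple i' * cs.simple i) ^ (j + 2 * k) * cs.simple i' := by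
  have hinv : (cs.simple i * cs.simple i')⁻¹ = cs.simple i' * cs.simple i := by simp
  have hcomm : SemiconjBy (cs.simple i') (cs.simple i * cs.simple i')
      (cs.simple i' * cs.simple i) := by
    simp [SemiconjBy, mul_assoc]
  rw [conj_eq_iff, ← inv_pow, hinv]
  simp only [mul_assoc, (hcomm.pow_right k).eq]
  simp only [← mul_assoc, ← pow_add]
  rw [show k + (j + k) = j + 2 * k by omega]

lemma signFlipPerm_mul_pow_apply (i i' : B) (k : ℕ) (t : W) (ε : ℤˣ) :
    ((signFlipPerm cs i * signFlipPerm cs i') ^ k) (t, ε) =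
      ((cs.simple i * cs.simple i') ^ k * t * ((cs.simple i * cs.simple i') ^ k)⁻¹,
        (∏ j ∈ Finset.range (2 * k),
          if t = (cs.simple i' * cs.simple i) ^ j * cs.simple i' then -1 else 1) * ε) := by
  induction k with
  | zero => simp
  | succ k ih =>
    rw [pow_succ', Equiv.Perm.mul_apply, ih]
    simp only [Equiv.Perm.mul_apply, signFlipPerm, Function.Involutive.coe_toPerm, signFlip]
    refine Prod.ext (by simp [pow_succ', mul_assoc]) ?_
    have hb := conj_pow_eq_dihedral_iff cs i i' 0 k t
    have ha := conj_pow_eq_dihedral_iff cs i i' 1 k t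
    have hs : ∀ x y : W, cs.simple i' * x * cs.simple i' = y ↔
        x = cs.simple i' * y * cs.simple i' := by
      simpa using fun x y => conj_eq_iff (g := cs.simple i') (x := x) (y := y)
    rw [zero_add, pow_zero, one_mul] at hb
    rw [pow_one, add_comm 1, ← hs] at ha
    simp only [hb, ha, show 2 * (k + 1) = 2 * k + 1 + 1 by ring, Finset.prod_range_succ]
    ac_rfl

lemma isLiftable_signFlipPerm : M.IsLiftable (signFlipPerm cs) := by
  intro i i'
  ext ⟨t, ε⟩ : 1
  have hperiod : ∀ j, (cs.simple i' * cs.simple i) ^ (M i i' + j) =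
      (cs.simple i' * cs.simple i) ^ j :=
    fun j => by rw [pow_add, cs.simple_mul_simple_pow', one_mul]
  -- the sign factors repeat with period `M i i'`, so they cancel in pairs
  rw [signFlipPerm_mul_pow_apply, cs.simple_mul_simple_pow, two_mul, Finset.prod_range_add]
  simp [hperiod, Int.units_mul_self]

noncomputable def signAction : W →* Equiv.Perm (W × ℤˣ) :=
  cs.lift ⟨signFlipPerm cs, isLiftable_signFlipPerm cs⟩

lemma signAction_simple (i : B) : signAction cs (cs.simple i) = signFlipPerm cs i :=
  cs.lift_apply_simple _ i

lemma signAction_wordProd (ω : List B) (t : W) (ε : ℤˣ) :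
    signAction cs (cs.wordProd ω) (t, ε) =
      (cs.wordProd ω * t * (cs.wordProd ω)⁻¹, (-1) ^ (cs.rightInvSeq ω).count t * ε) := by
  induction ω generalizing t ε with
  | nil => simp
  | cons i ω ih =>
    rw [cs.wordProd_cons, map_mul, Equiv.Perm.mul_apply, ih, signAction_simple]
    simp only [signFlipPerm, Function.Involutive.coe_toPerm, signFlip, CoxeterSystem.rightInvSeq,
      List.count_cons, conj_eq_iff, eq_comm (a := t), beq_iff_eq]
    refine Prod.ext (by simp [mul_assoc]) ?_
    split_ifs <;> simp [pow_succ, mul_comm, mul_left_comm]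

noncomputable def inversionSign (w t : W) : ℤˣ := (signAction cs w (t, 1)).2

lemma signAction_apply (w t : W) (ε : ℤˣ) :
    signAction cs w (t, ε) = (w * t * w⁻¹, inversionSign cs w t * ε) := by
  obtain ⟨ω, -, rfl⟩ := cs.exists_isReduced w
  simp [inversionSign, signAction_wordProd]

lemma inversionSign_wordProd (ω : List B) (t : W) :
    inversionSign cs (cs.wordProd ω) t = (-1) ^ (cs.rightInvSeq ω).count t := by
  simp [inversionSign, signAction_wordProd]

lemma inversionSign_mul (g h t : W) :
    inversionSign cs (g * h) t = inversionSign cs g (h * t * h⁻¹) * inversionSign cs h t := by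
  have := congr_arg Prod.snd (signAction_apply cs (g * h) t 1)
  rw [map_mul, Equiv.Perm.mul_apply, signAction_apply, signAction_apply] at this
  simpa using this.symm

lemma inversionSign_one (t : W) : inversionSign cs 1 t = 1 := by
  simp [inversionSign]

lemma inversionSign_simple_self (i : B) : inversionSign cs (cs.simple i) (cs.simple i) = -1 := by
  simp [inversionSign, signAction_simple, signFlipPerm, signFlip]

lemma inversionSign_self {t : W} (ht : cs.IsReflection t) : inversionSign cs t t = -1 := by
  obtain ⟨p, i, rfl⟩ := ht
  have hp : p⁻¹ * (p * cs.simple i * p⁻¹) * p = cs.simple i := by group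
  have hcancel := inversionSign_mul cs p p⁻¹ (p * cs.simple i * p⁻¹)
  rw [mul_inv_cancel, inversionSign_one, inv_inv, hp] at hcancel
  rw [inversionSign_mul, inversionSign_mul, inv_inv, hp, cs.inv_simple,
    cs.simple_mul_simple_cancel_right, inversionSign_simple_self, mul_right_comm, ← hcancel,
    one_mul]

lemma mem_rightInvSeq_of_inversionSign_eq_neg_one {ω : List B} {t : W}
    (h : inversionSign cs (cs.wordProd ω) t = -1) : t ∈ cs.rightInvSeq ω := by
  rw [← List.count_pos_iff, Nat.pos_iff_ne_zero]
  intro hcount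
  rw [inversionSign_wordProd, hcount, pow_zero] at h
  exact absurd h (by decide)

lemma inversionSign_eq_neg_one_of_isRightInversion {w t : W} (h : cs.IsRightInversion w t) :
    inversionSign cs w t = -1 := by
  obtain ⟨ht, hlt⟩ := h
  have hw : w * t * t = w := by rw [mul_assoc, ht.mul_self, mul_one]
  have hflip := inversionSign_mul cs (w * t) t t
  rw [hw, ht.inv, ht.mul_self, one_mul, inversionSign_self cs ht] at hflip
  -- the signs at `w` and `w * t` differ, and `-1` at `w * t` would make `t` an inversion of `w * t`
  rcases Int.units_eq_one_or (inversionSign cs (w * t) t) with h1 | h1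
  · rw [hflip, h1, one_mul]
  · obtain ⟨ω, hω, hωw⟩ := cs.exists_isReduced (w * t)
    rw [hωw] at h1
    have := (cs.isRightInversion_of_mem_rightInvSeq hω
      (mem_rightInvSeq_of_inversionSign_eq_neg_one cs h1)).2
    rw [← hωw, hw] at this
    omega

theorem mem_rightInvSeq_of_isRightInversion {ω : List B} {t : W}
    (h : cs.IsRightInversion (cs.wordProd ω) t) : t ∈ cs.rightInvSeq ω :=
  mem_rightInvSeq_of_inversionSign_eq_neg_one cs (inversionSign_eq_neg_one_of_isRightInversion cs h)

theorem mem_leftInvSeq_of_isLeftInversion {ω : List B} {t : W}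
    (h : cs.IsLeftInversion (cs.wordProd ω) t) : t ∈ cs.leftInvSeq ω := by
  rw [← cs.isRightInversion_inv_iff, ← cs.wordProd_reverse] at h
  simpa [cs.rightInvSeq_reverse] using mem_rightInvSeq_of_isRightInversion cs h

theorem isLeftInversion_simple_mul_conj {w t : W} {i : B} (hi : cs.IsLeftDescent w i)
    (ht : cs.IsLeftInversion w t) (hne : t ≠ cs.simple i) :
    cs.IsLeftInversion (cs.simple i * w) (cs.simple i * t * cs.simple i) := by
  obtain ⟨β, hβ, hβw⟩ := cs.exists_isReduced (cs.simple i * w)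
  have hw : cs.wordProd (i :: β) = w := by
    rw [cs.wordProd_cons, ← hβw, cs.simple_mul_simple_cancel_left]
  have hred : cs.IsReduced (i :: β) := by
    have := cs.isLeftDescent_iff.mp hi
    rw [CoxeterSystem.IsReduced, hw, List.length_cons, ← hβ.eq, ← hβw, this]
  rw [← hw] at ht
  have hmem := mem_leftInvSeq_of_isLeftInversion cs ht
  simp only [CoxeterSystem.leftInvSeq, List.mem_cons, hne, false_or, List.mem_map] at hmem
  obtain ⟨t', ht', rfl⟩ := hmem
  rw [hβw]
  simpa [MulAut.conj_apply, mul_assoc] using cs.isLeftInversion_of_mem_leftInvSeq hβ ht'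

end SignAction

section Bruhat

variable {cs : CoxeterSystem M W}

lemma Step.simple_mul {u w : W} {i : B} (h : Step cs u w) (hw : cs.IsLeftDescent w i)
    (hu : u ≠ cs.simple i * w) : Step cs (cs.simple i * u) (cs.simple i * w) := by
  obtain ⟨t, ht, rfl, hlt⟩ := h
  have hne : t ≠ cs.simple i := by
    rintro rfl
    exact hu (cs.simple_mul_simple_cancel_left i).symm
  have htu : cs.IsLeftInversion (t * u) t :=
    ⟨ht, by rwa [← mul_assoc, ht.mul_self, one_mul]⟩
  obtain ⟨ht', hlt'⟩ := isLeftInversion_simple_mul_conj cs hw htu hne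
  have hsu : cs.simple i * t * cs.simple i * (cs.simple i * (t * u)) = cs.simple i * u := by
    simp [mul_assoc, ← mul_assoc t t, ht.mul_self]
  refine ⟨_, ht', ?_, hsu ▸ hlt'⟩
  simp [mul_assoc]

lemma step_simple_mul {w : W} {i : B} (h : ¬ cs.IsLeftDescent w i) :
    Step cs w (cs.simple i * w) :=
  ⟨cs.simple i, cs.isReflection_simple i, rfl, by rw [cs.not_isLeftDescent_iff.mp h]; omega⟩

lemma step_mul_simple {w : W} {i : B} (h : ¬ cs.IsRightDescent w i) :
    Step cs w (w * cs.simple i) :=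
  ⟨w * cs.simple i * w⁻¹, (cs.isReflection_simple i).conj w, by group,
    by rw [cs.not_isRightDescent_iff.mp h]; omega⟩

lemma BruhatLE.inv {v w : W} (h : BruhatLE cs v w) : BruhatLE cs v⁻¹ w⁻¹ := by
  refine Relation.ReflTransGen.lift (fun x => x⁻¹) ?_ _ _ h
  rintro u _ ⟨t, ht, rfl, hlt⟩
  refine ⟨u⁻¹ * t * u, by simpa using ht.conj u⁻¹, by simp [ht.inv], ?_⟩
  simpa only [cs.length_inv] using hlt

theorem BruhatLE.le_simple_mul_of_isLeftDescent {v w : W} {i : B} (h : BruhatLE cs v w)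
    (hw : cs.IsLeftDescent w i) (hv : ¬ cs.IsLeftDescent v i) :
    BruhatLE cs v (cs.simple i * w) := by
  induction h with
  | refl => exact absurd hw hv
  | @tail u w hvu huw ih =>
    by_cases hu : u = cs.simple i * w
    · exact hu ▸ hvu
    have hstep := huw.simple_mul hw hu
    by_cases hui : cs.IsLeftDescent u i
    · exact (ih hui).tail hstep
    · exact (hvu.tail (step_simple_mul hui)).tail hstep

theorem BruhatLE.le_mul_simple_of_isRightDescent {v w : W} {i : B} (h : BruhatLE cs v w)
    (hw : cs.IsRightDescent w i) (hv : ¬ cs.IsRightDescent v i) :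
    BruhatLE cs v (w * cs.simple i) := by
  rw [← cs.isLeftDescent_inv_iff] at hw hv
  simpa using (h.inv.le_simple_mul_of_isLeftDescent hw hv).inv

theorem BruhatLE.le_simple_mul {u z : W} {i : B} (h : BruhatLE cs u z)
    (hu : ¬ cs.IsLeftDescent u i) : BruhatLE cs u (cs.simple i * z) := by
  by_cases hz : cs.IsLeftDescent z i
  · exact h.le_simple_mul_of_isLeftDescent hz hu
  · exact h.tail (step_simple_mul hz)

theorem BruhatLE.le_mul_simple {u z : W} {i : B} (h : BruhatLE cs u z)
    (hu : ¬ cs.IsRightDescent u i) : BruhatLE cs u (z * cs.simple i) := by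
  by_cases hz : cs.IsRightDescent z i
  · exact h.le_mul_simple_of_isRightDescent hz hu
  · exact h.tail (step_mul_simple hz)

theorem le_mul_of_length_mul_eq {x y : W} (h : cs.length (x * y) = cs.length x + cs.length y) :
    BruhatLE cs x (x * y) := by
  induction hn : cs.length y using Nat.strong_induction_on generalizing y with
  | _ n ih =>
  rcases eq_or_ne y 1 with rfl | hy
  · rw [mul_one]
    exact .refl
  obtain ⟨j, hj⟩ := cs.exists_rightDescent_of_ne_one hy
  have hyj := cs.isRightDescent_iff.mp hj
  have hsub := cs.length_mul_le x (y * cs.simple j)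
  have hstep := cs.length_mul_simple (x * (y * cs.simple j)) j
  rw [mul_assoc, cs.simple_mul_simple_cancel_right] at hstep
  have hle : BruhatLE cs x (x * (y * cs.simple j)) := ih _ (by omega) (by omega) rfl
  have hasc : ¬ cs.IsRightDescent (x * (y * cs.simple j)) j := by
    rw [cs.not_isRightDescent_iff, mul_assoc, cs.simple_mul_simple_cancel_right]
    omega
  have := hle.tail (step_mul_simple hasc)
  rwa [mul_assoc, cs.simple_mul_simple_cancel_right] at this

theorem simple_le_of_isLeftDescent {v : W} {i : B} (h : cs.IsLeftDescent v i) :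
    BruhatLE cs (cs.simple i) v := by
  have hlen := cs.isLeftDescent_iff.mp h
  simpa using le_mul_of_length_mul_eq (cs := cs) (x := cs.simple i) (y := cs.simple i * v)
    (by rw [cs.simple_mul_simple_cancel_left, cs.length_simple]; omega)

theorem simple_le_of_isRightDescent {v : W} {i : B} (h : cs.IsRightDescent v i) :
    BruhatLE cs (cs.simple i) v := by
  simpa using (simple_le_of_isLeftDescent (cs.isLeftDescent_inv_iff.mpr h)).inv

end Bruhat

section DoubleCoset

variable {cs : CoxeterSystem M W} {I J : Set B}

def DescentFree (cs : CoxeterSystem M W) (I J : Set B) (u : W) : Prop :=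
  (∀ i ∈ I, ¬ cs.IsLeftDescent u i) ∧ ∀ j ∈ J, ¬ cs.IsRightDescent u j

lemma simple_mem_parabolic {i : B} (hi : i ∈ I) : cs.simple i ∈ parabolic cs I :=
  Subgroup.subset_closure ⟨i, hi, rfl⟩

lemma simple_mul_mem_doubleCoset {u z : W} {i : B} (hi : i ∈ I)
    (hz : z ∈ doubleCoset cs I J u) : cs.simple i * z ∈ doubleCoset cs I J u := by
  obtain ⟨x, hx, y, hy, rfl⟩ := hz
  exact ⟨cs.simple i * x, mul_mem (simple_mem_parabolic hi) hx, y, hy, by simp [mul_assoc]⟩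

lemma mul_simple_mem_doubleCoset {u z : W} {j : B} (hj : j ∈ J)
    (hz : z ∈ doubleCoset cs I J u) : z * cs.simple j ∈ doubleCoset cs I J u := by
  obtain ⟨x, hx, y, hy, rfl⟩ := hz
  exact ⟨x, hx, y * cs.simple j, mul_mem hy (simple_mem_parabolic hj), by simp [mul_assoc]⟩

lemma mem_doubleCoset_comm {u z : W} (hz : z ∈ doubleCoset cs I J u) :
    u ∈ doubleCoset cs I J z := by
  obtain ⟨x, hx, y, hy, rfl⟩ := hz
  exact ⟨x⁻¹, inv_mem hx, y⁻¹, inv_mem hy, by group⟩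

theorem BruhatLE.mul_left_of_mem_parabolic {u x z : W} (hu : ∀ i ∈ I, ¬ cs.IsLeftDescent u i)
    (hx : x ∈ parabolic cs I) (h : BruhatLE cs u z) : BruhatLE cs u (x * z) := by
  induction hx using Subgroup.closure_induction_left generalizing z with
  | one => rwa [one_mul]
  | mul_left _ hs _ _ ih =>
    obtain ⟨i, hi, rfl⟩ := hs
    rw [mul_assoc]
    exact (ih h).le_simple_mul (hu i hi)
  | inv_mul_cancel _ hs _ _ ih =>
    obtain ⟨i, hi, rfl⟩ := hs
    rw [cs.inv_simple, mul_assoc]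
    exact (ih h).le_simple_mul (hu i hi)

theorem BruhatLE.mul_right_of_mem_parabolic {u y z : W} (hu : ∀ j ∈ J, ¬ cs.IsRightDescent u j)
    (hy : y ∈ parabolic cs J) (h : BruhatLE cs u z) : BruhatLE cs u (z * y) := by
  induction hy using Subgroup.closure_induction_right generalizing z with
  | one => rwa [mul_one]
  | mul_right _ _ _ hs ih =>
    obtain ⟨j, hj, rfl⟩ := hs
    rw [← mul_assoc]
    exact (ih h).le_mul_simple (hu j hj)
  | mul_inv_cancel _ _ _ hs ih =>
    obtain ⟨j, hj, rfl⟩ := hs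
    rw [cs.inv_simple, ← mul_assoc]
    exact (ih h).le_mul_simple (hu j hj)

theorem DescentFree.le_of_mem_doubleCoset {u z : W} (hu : DescentFree cs I J u)
    (hz : z ∈ doubleCoset cs I J u) : BruhatLE cs u z := by
  obtain ⟨x, hx, y, hy, rfl⟩ := hz
  rw [mul_assoc]
  exact (BruhatLE.mul_right_of_mem_parabolic hu.2 hy .refl).mul_left_of_mem_parabolic hu.1 hx

theorem DescentFree.le_of_le_of_mem_doubleCoset {u v z : W} (hv : DescentFree cs I J v)
    (hz : z ∈ doubleCoset cs I J u) (hvz : BruhatLE cs v z) :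
    BruhatLE cs v u := by
  induction hn : cs.length z using Nat.strong_induction_on generalizing z with
  | _ n ih =>
  by_cases hL : ∃ i ∈ I, cs.IsLeftDescent z i
  · obtain ⟨i, hi, hzi⟩ := hL
    exact ih _ (hn ▸ hzi) (simple_mul_mem_doubleCoset hi hz)
      (hvz.le_simple_mul_of_isLeftDescent hzi (hv.1 i hi)) rfl
  by_cases hR : ∃ j ∈ J, cs.IsRightDescent z j
  · obtain ⟨j, hj, hzj⟩ := hR
    exact ih _ (hn ▸ hzj) (mul_simple_mem_doubleCoset hj hz)
      (hvz.le_mul_simple_of_isRightDescent hzj (hv.2 j hj)) rfl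
  push Not at hL hR
  exact hvz.trans (DescentFree.le_of_mem_doubleCoset ⟨hL, hR⟩ (mem_doubleCoset_comm hz))

theorem descentFree_of_forall_length_le {u z : W} (hu : u ∈ doubleCoset cs I J z)
    (hmin : ∀ x ∈ doubleCoset cs I J z, cs.length u ≤ cs.length x) : DescentFree cs I J u :=
  ⟨fun _ hi hui => (hmin _ (simple_mul_mem_doubleCoset hi hu)).not_gt hui,
    fun _ hj huj => (hmin _ (mul_simple_mem_doubleCoset hj hu)).not_gt huj⟩

end DoubleCoset

/-- If `w` is separated (its descents avoid the support of `P_↓(w)`), then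
`B_↓(w) = [e, P_↓(w)]`. -/
theorem separated_lowerQuotient_eq_interval (cs : CoxeterSystem M W) (w pw : W)
    (hpw : pw ∈ bCoset cs w w)
    (hpw_min : ∀ x ∈ bCoset cs w w, cs.length pw ≤ cs.length x)
    (hsepL : leftDescents cs w ∩ support cs pw = ∅)
    (hsepR : rightDescents cs w ∩ support cs pw = ∅) :
    {v : W | BruhatLE cs v w ∧ (∀ i ∈ leftDescents cs w, ¬ cs.IsLeftDescent v i) ∧
        (∀ i ∈ rightDescents cs w, ¬ cs.IsRightDescent v i)}
      = {v : W | BruhatLE cs v pw} := by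
  have hpw_free : DescentFree cs (leftDescents cs w) (rightDescents cs w) pw :=
    descentFree_of_forall_length_le hpw hpw_min
  have hw : w ∈ bCoset cs w pw := mem_doubleCoset_comm hpw
  ext v
  constructor
  · rintro ⟨hvw, hv⟩
    exact DescentFree.le_of_le_of_mem_doubleCoset hv hw hvw
  · intro hvpw
    refine ⟨hvpw.trans (hpw_free.le_of_mem_doubleCoset hw), fun _ hi hvi => ?_,
      fun _ hi hvi => ?_⟩
    · exact hsepL.subset ⟨hi, (simple_le_of_isLeftDescent hvi).trans hvpw⟩
    · exact hsepR.subset ⟨hi, (simple_le_of_isRightDescent hvi).trans hvpw⟩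

end CoxeterBruhat
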